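/- arXiv:1209.3687 — 5 statements merged into one kernel-verified Lean document; each statement's English description precedes it below -/
import Mathlib

section
/- For every integer n ≥ 1, N ≥ 0, and complex z with z ≠ 1, the truncated series satisfies Σ_{j=0}^{N} C(n+j-1, j) z^j = (1-z)^{-n} - Σ_{j=1}^{n} C(N+n, N+j) z^{N+j} (1-z)^{-j}. -/
/-!
Multiplying by `(1 - z) ^ n` turns the claim into a polynomial identity: expand
`1 = (z + (1 - z)) ^ (N + n)` binomially and split the sum at `k = N`. The terms `k > N` are the
correction terms, and the lower tail `∑_{k ≤ N} C(N+n, k) z^k (1-z)^(N+n-k)` equals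
`(1 - z) ^ n ∑_{j ≤ N} C(n-1+j, j) z^j`: by Pascal's rule, raising `N` by one adds exactly the
term `C(N+n, N+1) z^(N+1) (1-z)^n`.
-/

open Finset

section
variable {R : Type*} [CommRing R] {x y : R}

theorem sum_range_pow_mul_pow_mul_choose_succ (h : x + y = 1) {M N : ℕ} (hNM : N < M) :
    ∑ k ∈ range (N + 2), x ^ k * y ^ (M + 1 - k) * ((M + 1).choose k : R) =
      ∑ k ∈ range (N + 1), x ^ k * y ^ (M - k) * (M.choose k : R) +
        x ^ (N + 1) * y ^ (M - N) * (M.choose (N + 1) : R) := by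
  set a := ∑ k ∈ range (N + 1), x ^ k * y ^ (M - k) * (M.choose k : R)
  have hpascal :=
    sum_range_succ' (fun k => x ^ k * y ^ (M + 1 - k) * ((M + 1).choose k : R)) (N + 1)
  have hlow := sum_range_succ' (fun k => x ^ k * y ^ (M + 1 - k) * (M.choose k : R)) (N + 1)
  simp only [Nat.choose_succ_succ', Nat.cast_add, Nat.add_sub_add_right, mul_add, sum_add_distrib,
    Nat.choose_zero_right] at hpascal hlow
  have hshift : ∑ k ∈ range (N + 2), x ^ k * y ^ (M + 1 - k) * (M.choose k : R) =
      y * (a + x ^ (N + 1) * y ^ (M - (N + 1)) * (M.choose (N + 1) : R)) := by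
    rw [← sum_range_succ, mul_sum]
    refine sum_congr rfl fun k hk => ?_
    rw [Nat.sub_add_comm (by simp at hk; omega), pow_succ]
    ring
  have hx : ∑ i ∈ range (N + 1), x ^ (i + 1) * y ^ (M - i) * (M.choose i : R) = x * a := by
    rw [mul_sum]
    exact sum_congr rfl fun i _ => by ring
  rw [hpascal, add_assoc, ← hlow, hshift, hx, show M - N = M - (N + 1) + 1 by omega, pow_succ]
  linear_combination a * h

theorem sum_range_pow_mul_pow_mul_choose_eq (h : x + y = 1) (m N : ℕ) :
    ∑ k ∈ range (N + 1), x ^ k * y ^ (N + m + 1 - k) * ((N + m + 1).choose k : R) =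
      y ^ (m + 1) * ∑ j ∈ range (N + 1), ((m + j).choose j : R) * x ^ j := by
  induction N with
  | zero => simp
  | succ N ih =>
    rw [show N + 1 + m + 1 = N + m + 1 + 1 by ring,
      sum_range_pow_mul_pow_mul_choose_succ h (by omega), ih, sum_range_succ _ (N + 1),
      show N + m + 1 - N = m + 1 by omega, show m + (N + 1) = N + m + 1 by ring]
    ring

theorem pow_mul_sum_range_choose_add_sum_Icc_eq_one (h : x + y = 1) (m N : ℕ) :
    y ^ (m + 1) * ∑ j ∈ range (N + 1), ((m + j).choose j : R) * x ^ j +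
      ∑ j ∈ Icc 1 (m + 1), ((N + m + 1).choose (N + j) : R) * x ^ (N + j) * y ^ (m + 1 - j) =
        1 := by
  have hbinom := add_pow x y (N + m + 1)
  rw [h, one_pow, show N + m + 1 + 1 = (N + 1) + (m + 1) by ring, sum_range_add,
    sum_range_pow_mul_pow_mul_choose_eq h] at hbinom
  rw [hbinom, ← Ico_add_one_right_eq_Icc, sum_Ico_eq_sum_range, Nat.add_sub_cancel]
  congr 1
  refine sum_congr rfl fun i _ => ?_
  rw [show N + 1 + i = N + (1 + i) by ring,
    show N + m + 1 - (N + (1 + i)) = m + 1 - (1 + i) by omega]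
  ring
end

/-- Summation formula for the truncated n-th power geometric series. -/
theorem stmt_3 (n N : ℕ) (hn : 1 ≤ n) (z : ℂ) (hz : z ≠ 1) :
    ∑ j ∈ Finset.range (N + 1), (Nat.choose (n + j - 1) j : ℂ) * z ^ j =
      ((1 - z) ^ n)⁻¹ -
        ∑ j ∈ Finset.Icc 1 n,
          (Nat.choose (N + n) (N + j) : ℂ) * z ^ (N + j) * ((1 - z) ^ j)⁻¹ := by
  obtain ⟨m, rfl⟩ : ∃ m, n = m + 1 := ⟨n - 1, by omega⟩
  have key := pow_mul_sum_range_choose_add_sum_Icc_eq_one (add_sub_cancel z 1) m N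
  rw [eq_sub_iff_add_eq]
  refine eq_inv_of_mul_eq_one_left (Eq.trans ?_ key)
  rw [add_mul, mul_comm, sum_mul]
  simp only [Nat.add_sub_cancel_right, Nat.add_right_comm m 1, ← add_assoc N m]
  congr 1
  refine sum_congr rfl fun j hj => ?_
  rw [pow_sub₀ _ (sub_ne_zero.mpr hz.symm) (mem_Icc.mp hj).2]
  ring
end

section
/- Let X be a Hilbert space, A, H ∈ L(X), and Γ_{k,A}[H] = Σ_{j=0}^{k} (-1)^j C(k,j) A^{*j} H A^j. Then for all integers k ≥ 1 and N ≥ 0, H = Σ_{j=0}^{N} C(k+j-1, j) A^{*j} Γ_{k,A}[H] A^j + Σ_{j=1}^{k} C(N+k, N+j) A^{*(N+j)} Γ_{k-j,A}[H] A^{N+j}. -/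
/-!
Writing `B X = A* X A`, one has `B ^ j H = A*^j H A^j` and `Γ_{k,A}[H] = (1 - B) ^ k H`, so the
claim is the polynomial identity
`1 = Σ_{j ≤ N} C(k+j-1, j) z^j w^k + Σ_{1 ≤ j ≤ k} C(N+k, N+j) z^(N+j) w^(k-j)`
for `w = 1 - z`, evaluated at `z = B` and applied to `H`. For `N = 0` this is the binomial
expansion of `(z + w) ^ k`; passing from `N` to `N + 1` moves exactly the term
`C(N+k, N+1) z^(N+1) w^k` from the second sum into the first, by a telescoping sum built from
Pascal's rule and `z + w = 1`.
-/

open ContinuousLinearMap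

/-- `Γ_{k,A}[H] = Σ_{j=0}^k (-1)^j C(k,j) A^{*j} H A^j`. -/
noncomputable def Gamma {X : Type*} [NormedAddCommGroup X] [InnerProductSpace ℂ X]
    [CompleteSpace X] (A H : X →L[ℂ] X) (k : ℕ) : X →L[ℂ] X :=
  ∑ j ∈ Finset.range (k + 1),
    ((-1 : ℂ) ^ j * (Nat.choose k j : ℂ)) • (((adjoint A) ^ j) ∘L H ∘L (A ^ j))

theorem Finset.sum_Icc_one_eq_sum_range {M : Type*} [AddCommMonoid M] (f : ℕ → M) (k : ℕ) :
    ∑ j ∈ Icc 1 k, f j = ∑ i ∈ range k, f (i + 1) := by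
  rw [← Ico_add_one_right_eq_Icc, sum_Ico_eq_sum_range, Nat.add_sub_cancel]
  simp only [add_comm 1]

section BinomialTail

open Finset

variable {R : Type*} [CommRing R]

theorem add_pow_eq_pow_add_sum_Icc (z w : R) (k : ℕ) :
    (z + w) ^ k = w ^ k + ∑ j ∈ Icc 1 k, (k.choose j : R) * z ^ j * w ^ (k - j) := by
  rw [add_pow, sum_range_succ', sum_Icc_one_eq_sum_range]
  simp only [pow_zero, Nat.choose_zero_right, Nat.cast_one, Nat.sub_zero]
  rw [add_comm]
  congr 1
  · ring
  · exact sum_congr rfl fun i _ => by ring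

theorem sum_Icc_choose_mul_pow_eq_add_succ (z w : R) (hzw : z + w = 1) (k N : ℕ) :
    ∑ j ∈ Icc 1 k, ((N + k).choose (N + j) : R) * z ^ (N + j) * w ^ (k - j) =
      ((N + k).choose (N + 1) : R) * z ^ (N + 1) * w ^ k +
        ∑ j ∈ Icc 1 k,
          ((N + 1 + k).choose (N + 1 + j) : R) * z ^ (N + 1 + j) * w ^ (k - j) := by
  set g : ℕ → R := fun i => ((N + k).choose (N + 1 + i) : R) * z ^ (N + 1 + i) * w ^ (k - i)
  have step : ∀ i ∈ range k,
      ((N + k).choose (N + (i + 1)) : R) * z ^ (N + (i + 1)) * w ^ (k - (i + 1)) =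
        ((N + 1 + k).choose (N + 1 + (i + 1)) : R) * z ^ (N + 1 + (i + 1)) * w ^ (k - (i + 1))
          + (g i - g (i + 1)) := by
    intro i hi
    have hk : k - i = k - (i + 1) + 1 := by have := mem_range.1 hi; omega
    simp only [g, hk, show N + 1 + k = N + k + 1 by ring,
      show N + 1 + (i + 1) = N + 1 + i + 1 by ring, Nat.choose_succ_succ', Nat.cast_add]
    rw [show N + (i + 1) = N + 1 + i by ring]
    linear_combination
      (-((N + k).choose (N + 1 + i) : R) * z ^ (N + 1 + i) * w ^ (k - (i + 1))) * hzw
  have g_top : g k = 0 := by simp [g, Nat.choose_eq_zero_of_lt (by omega : N + k < N + 1 + k)]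
  rw [sum_Icc_one_eq_sum_range, sum_Icc_one_eq_sum_range, sum_congr rfl step, sum_add_distrib,
    sum_range_sub', g_top]
  simp only [g, add_zero, Nat.sub_zero]
  ring

theorem sum_range_choose_mul_pow_add_sum_Icc_eq_one (z w : R) (hzw : z + w = 1) (k N : ℕ) :
    ∑ j ∈ range (N + 1), ((k + j - 1).choose j : R) * z ^ j * w ^ k +
      ∑ j ∈ Icc 1 k, ((N + k).choose (N + j) : R) * z ^ (N + j) * w ^ (k - j) = 1 := by
  induction N with
  | zero => simpa [hzw] using (add_pow_eq_pow_add_sum_Icc z w k).symm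
  | succ N ih =>
    rw [sum_Icc_choose_mul_pow_eq_add_succ z w hzw] at ih
    rw [sum_range_succ, show k + (N + 1) - 1 = N + k by omega, ← ih]
    ring

end BinomialTail

theorem LinearMap.mulLeftRight_pow {R A : Type*} [CommSemiring R] [Semiring A] [Algebra R A]
    (a b : A) (n : ℕ) : mulLeftRight R (a, b) ^ n = mulLeftRight R (a ^ n, b ^ n) := by
  simp only [mulLeftRight, ← Module.End.mul_eq_comp, ← pow_mulLeft, ← pow_mulRight]
  exact (commute_mulLeft_right a b).symm.mul_pow n

theorem one_sub_mulLeftRight_adjoint_pow_apply {X : Type*} [NormedAddCommGroup X]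
    [InnerProductSpace ℂ X] [CompleteSpace X] (A H : X →L[ℂ] X) (k : ℕ) :
    ((1 - LinearMap.mulLeftRight ℂ (adjoint A, A)) ^ k) H = Gamma A H k := by
  rw [sub_eq_neg_add, (Commute.one_right _).add_pow, LinearMap.sum_apply, Gamma]
  refine Finset.sum_congr rfl fun j _ => ?_
  rw [one_pow, mul_one, ← neg_one_smul ℂ (LinearMap.mulLeftRight ℂ _), smul_pow,
    LinearMap.mulLeftRight_pow, smul_mul_assoc, LinearMap.smul_apply, Module.End.mul_apply,
    Module.End.natCast_apply, map_nsmul, LinearMap.mulLeftRight_apply,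
    ← Nat.cast_smul_eq_nsmul ℂ, smul_smul, mul_comm, mul_def, mul_def, comp_assoc]

theorem stmt_7_general {X : Type*} [NormedAddCommGroup X] [InnerProductSpace ℂ X] [CompleteSpace X]
    (A H : X →L[ℂ] X) (k N : ℕ) :
    H =
      (∑ j ∈ Finset.range (N + 1),
        (Nat.choose (k + j - 1) j : ℂ) • (((adjoint A) ^ j) ∘L Gamma A H k ∘L (A ^ j))) +
      ∑ j ∈ Finset.Icc 1 k,
        (Nat.choose (N + k) (N + j) : ℂ) •
          (((adjoint A) ^ (N + j)) ∘L Gamma A H (k - j) ∘L (A ^ (N + j))) := by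
  have h := congrArg (fun p => Polynomial.aeval (LinearMap.mulLeftRight ℂ (adjoint A, A)) p H)
    (sum_range_choose_mul_pow_add_sum_Icc_eq_one (Polynomial.X : Polynomial ℂ) (1 - Polynomial.X)
      (add_sub_cancel _ _) k N)
  simp only [map_add, map_sum, map_mul, map_natCast, map_pow, map_sub, map_one, Polynomial.aeval_X,
    LinearMap.add_apply, LinearMap.sum_apply, Module.End.mul_apply, Module.End.natCast_apply,
    Module.End.one_apply, one_sub_mulLeftRight_adjoint_pow_apply, LinearMap.mulLeftRight_pow,
    LinearMap.mulLeftRight_apply, mul_def, comp_assoc] at h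
  simpa only [Nat.cast_smul_eq_nsmul ℂ] using h.symm

/-- Reconstruction of `H` from `Γ_{k,A}[H]` and the lower-order remainders. -/
theorem stmt_7 {X : Type*} [NormedAddCommGroup X] [InnerProductSpace ℂ X] [CompleteSpace X]
    (A H : X →L[ℂ] X) (k N : ℕ) (hk : 1 ≤ k) :
    H =
      (∑ j ∈ Finset.range (N + 1),
        (Nat.choose (k + j - 1) j : ℂ) • (((adjoint A) ^ j) ∘L Gamma A H k ∘L (A ^ j))) +
      ∑ j ∈ Finset.Icc 1 k,
        (Nat.choose (N + k) (N + j) : ℂ) •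
          (((adjoint A) ^ (N + j)) ∘L Gamma A H (k - j) ∘L (A ^ (N + j))) :=
  stmt_7_general A H k N
end

section
/- Let X be a Hilbert space, n ≥ 3 an integer, and H, A ∈ L(X) with H ≥ A*HA ≥ 0 and Γ_{n,A}[H] ≥ 0, where Γ_{k,A}[H] = Σ_{j=0}^{k} (-1)^j C(k,j) A^{*j} H A^j. Then Γ_{k,A}[H] ≥ 0 for all k = 1, …, n-1. -/
/-!
Put `d k m = re ⟪Γ_k Aᵐx, Aᵐx⟫`. Since `Γ_{k+1} = Γ_k - A*Γ_k A`, each row `d (k+1)` is the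
sequence of decrements of the row `d k`, so `Γ_{k+1} ≥ 0` says exactly that the row `d k` is
nonincreasing for every `x`. From `H ≥ A*HA ≥ 0` the row `d 0` is nonincreasing and nonnegative,
hence bounded, and then so is every row. A bounded-above sequence whose decrements are
nonincreasing is itself nonincreasing (otherwise it grows at least linearly), so monotonicity
propagates downwards from the row `d (n-1)`, which is nonincreasing because `Γ_n ≥ 0`.
-/

open ContinuousLinearMap

theorem antitone_of_bddAbove_of_antitone_sub_succ {f : ℕ → ℝ} (hf : BddAbove (Set.range f))
    (h : Antitone fun m => f m - f (m + 1)) : Antitone f := by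
  refine antitone_nat_of_succ_le fun m => ?_
  by_contra! hm
  obtain ⟨B, hB⟩ := hf
  have hgrowth : ∀ t : ℕ, f m + t * (f (m + 1) - f m) ≤ f (m + t) := by
    intro t
    induction t with
    | zero => simp
    | succ t ih =>
      have hdec : f (m + t) - f (m + t + 1) ≤ f m - f (m + 1) := h (Nat.le_add_right m t)
      push_cast
      rw [← add_assoc]
      linarith
  obtain ⟨t, ht⟩ := exists_nat_gt ((B - f m) / (f (m + 1) - f m))
  rw [div_lt_iff₀ (sub_pos.mpr hm)] at ht
  linarith [hgrowth t, hB ⟨m + t, rfl⟩]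

section DifferenceTable

variable {d : ℕ → ℕ → ℝ}

theorem abs_le_two_pow_mul_of_abs_le (hrec : ∀ k m, d (k + 1) m = d k m - d k (m + 1)) {C : ℝ}
    (h0 : ∀ m, |d 0 m| ≤ C) (k m : ℕ) : |d k m| ≤ 2 ^ k * C := by
  induction k generalizing m with
  | zero => simpa using h0 m
  | succ k ih =>
    rw [hrec, pow_succ]
    linarith [abs_sub (d k m) (d k (m + 1)), ih m, ih (m + 1)]

theorem antitone_iff_nonneg_succ (hrec : ∀ k m, d (k + 1) m = d k m - d k (m + 1)) (k : ℕ) :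
    Antitone (d k) ↔ ∀ m, 0 ≤ d (k + 1) m := by
  simp only [hrec, sub_nonneg]
  exact ⟨fun h m => h (Nat.le_succ m), antitone_nat_of_succ_le⟩

theorem nonneg_of_nonneg_of_abs_le (hrec : ∀ k m, d (k + 1) m = d k m - d k (m + 1)) {C : ℝ}
    (h0 : ∀ m, |d 0 m| ≤ C) {n : ℕ} (hn : ∀ m, 0 ≤ d n m) {k : ℕ} (hk : 1 ≤ k) (hkn : k ≤ n) :
    ∀ m, 0 ≤ d k m := by
  obtain ⟨j, rfl⟩ : ∃ j, k = j + 1 := ⟨k - 1, by omega⟩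
  obtain ⟨n, rfl⟩ : ∃ n', n = n' + 1 := ⟨n - 1, by omega⟩
  have hbdd (i : ℕ) : BddAbove (Set.range (d i)) :=
    ⟨2 ^ i * C, Set.forall_mem_range.mpr fun m =>
      (le_abs_self _).trans (abs_le_two_pow_mul_of_abs_le hrec h0 i m)⟩
  refine (antitone_iff_nonneg_succ hrec j).mp ?_
  refine Nat.decreasingInduction (motive := fun i _ => Antitone (d i)) (fun i _ hsucc => ?_)
    ((antitone_iff_nonneg_succ hrec n).mpr hn) (Nat.le_of_succ_le_succ hkn)
  refine antitone_of_bddAbove_of_antitone_sub_succ (hbdd i) ?_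
  simpa only [← hrec] using hsucc

end DifferenceTable

section Gamma

variable {X : Type*} [NormedAddCommGroup X] [InnerProductSpace ℂ X] [CompleteSpace X]

noncomputable def conjByAdjoint (A : X →L[ℂ] X) : Module.End ℂ (X →L[ℂ] X) :=
  LinearMap.mulLeft ℂ (adjoint A) * LinearMap.mulRight ℂ A

variable (A H : X →L[ℂ] X)

theorem conjByAdjoint_pow_apply (j : ℕ) :
    (conjByAdjoint A ^ j) H = (adjoint A ^ j) ∘L H ∘L (A ^ j) := by
  rw [conjByAdjoint, (LinearMap.commute_mulLeft_right _ _).mul_pow, LinearMap.pow_mulLeft,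
    LinearMap.pow_mulRight]
  simp only [Module.End.mul_apply, LinearMap.mulLeft_apply, LinearMap.mulRight_apply]
  rfl

theorem Gamma_eq_pow_apply (k : ℕ) : Gamma A H k = ((1 - conjByAdjoint A) ^ k) H := by
  rw [sub_eq_neg_add, ((Commute.one_right (conjByAdjoint A)).neg_left).add_pow, Gamma,
    LinearMap.sum_apply]
  refine Finset.sum_congr rfl fun j _ => ?_
  rw [one_pow, mul_one, Module.End.mul_apply, Module.End.natCast_apply, map_nsmul,
    neg_pow (conjByAdjoint A), Module.End.mul_apply, conjByAdjoint_pow_apply,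
    ← neg_one_smul ℂ (1 : Module.End ℂ (X →L[ℂ] X)), smul_pow, one_pow, LinearMap.smul_apply,
    Module.End.one_apply, ← Nat.cast_smul_eq_nsmul ℂ, smul_smul, mul_comm]

theorem Gamma_zero : Gamma A H 0 = H := by
  rw [Gamma_eq_pow_apply, pow_zero, Module.End.one_apply]

theorem Gamma_succ (k : ℕ) :
    Gamma A H (k + 1) = Gamma A H k - adjoint A ∘L Gamma A H k ∘L A := by
  rw [Gamma_eq_pow_apply, Gamma_eq_pow_apply, pow_succ', Module.End.mul_apply,
    LinearMap.sub_apply, Module.End.one_apply]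
  rfl

theorem Gamma_isSelfAdjoint {H : X →L[ℂ] X} (hH : IsSelfAdjoint H) (k : ℕ) :
    IsSelfAdjoint (Gamma A H k) := by
  induction k with
  | zero => rwa [Gamma_zero]
  | succ k ih => rw [Gamma_succ]; exact ih.sub (ih.adjoint_conj A)

theorem reApplyInnerSelf_Gamma_succ (k : ℕ) (x : X) :
    (Gamma A H (k + 1)).reApplyInnerSelf x =
      (Gamma A H k).reApplyInnerSelf x - (Gamma A H k).reApplyInnerSelf (A x) := by
  simp only [reApplyInnerSelf, Gamma_succ, sub_apply, inner_sub_left, map_sub, comp_apply,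
    adjoint_inner_left]

end Gamma

theorem stmt_8_general {X : Type*} [NormedAddCommGroup X] [InnerProductSpace ℂ X] [CompleteSpace X]
    (n : ℕ) (A H : X →L[ℂ] X)
    (h1 : (H - adjoint A ∘L H ∘L A).IsPositive)
    (h2 : (adjoint A ∘L H ∘L A).IsPositive)
    (h3 : (Gamma A H n).IsPositive) :
    ∀ k, 1 ≤ k → k ≤ n - 1 → (Gamma A H k).IsPositive := by
  intro k hk hkn
  have hH : H.IsPositive := by simpa using h1.add h2
  refine isPositive_def'.mpr ⟨Gamma_isSelfAdjoint A hH.isSelfAdjoint k, fun x => ?_⟩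
  set d : ℕ → ℕ → ℝ := fun k m => (Gamma A H k).reApplyInnerSelf ((A ^ m) x) with hd
  have hrec (k m : ℕ) : d (k + 1) m = d k m - d k (m + 1) := by
    simp only [hd, reApplyInnerSelf_Gamma_succ, pow_succ', mul_apply_eq_comp]
  have hd0_nonneg (m : ℕ) : 0 ≤ d 0 m := by
    simpa only [hd, Gamma_zero] using hH.2 _
  have hd0_anti : Antitone (d 0) := (antitone_iff_nonneg_succ hrec 0).mpr fun m => by
    simpa only [hd, Gamma_succ, Gamma_zero] using h1.2 _
  have hd0_bdd (m : ℕ) : |d 0 m| ≤ d 0 0 :=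
    abs_le.mpr ⟨by linarith [hd0_nonneg 0, hd0_nonneg m], hd0_anti (Nat.zero_le m)⟩
  simpa [hd] using nonneg_of_nonneg_of_abs_le hrec hd0_bdd (fun m => h3.2 _) hk (by omega) 0

/-- The squeeze theorem: `H ≥ A*HA ≥ 0` and `Γ_{n,A}[H] ≥ 0` imply
`Γ_{k,A}[H] ≥ 0` for `k = 1, …, n-1`. -/
theorem stmt_8 {X : Type*} [NormedAddCommGroup X] [InnerProductSpace ℂ X] [CompleteSpace X]
    (n : ℕ) (hn : 3 ≤ n) (A H : X →L[ℂ] X)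
    (h1 : (H - adjoint A ∘L H ∘L A).IsPositive)
    (h2 : (adjoint A ∘L H ∘L A).IsPositive)
    (h3 : (Gamma A H n).IsPositive) :
    ∀ k, 1 ≤ k → k ≤ n - 1 → (Gamma A H k).IsPositive :=
  stmt_8_general n A H h1 h2 h3
end

section
/- Let X, Y be Hilbert spaces and (C,A) an n-output stable pair, so that G_m := Σ_{j=0}^{∞} C(m+j-1, j) A^{*j} C*C A^j converges strongly for m = n. Then G_m converges strongly for all 1 ≤ m ≤ n, and G_m - A* G_m A = G_{m-1} for m = 1, …, n, where G_0 := C*C. -/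
/-!
Write `S_m(N) = ∑_{j<N} C(m+j-1, j) A*^j C*C A^j`. Pascal's rule `C(m+j, j+1) = C(m+j-1, j+1) + C(m+j-1, j)`
gives `S_{m+1}(N+1) = S_m(N+1) + A* S_{m+1}(N) A`, so strong convergence of `S_{m+1}` to `G` forces
strong convergence of `S_m` to `G - A* G A`. Descending from `m = n` yields all the gramians and the Stein
identities, and at `m = 0` the sum collapses to `C*C` from `N = 1` on.
-/

open ContinuousLinearMap Filter Finset

section Gramian

variable {R X : Type*} [Ring R] [TopologicalSpace X] [AddCommGroup X] [Module R X]
  [IsTopologicalAddGroup X]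

/-- Partial sums of `G_m x`, with `A*` generalized to `B` and `C*C` to `Q`. At `m = 0` the
coefficient `C(j - 1, j)` uses truncated subtraction: it is `1` at `j = 0` and `0` afterwards. -/
noncomputable def gramianPartialSum (A B Q : X →L[R] X) (m N : ℕ) (x : X) : X :=
  ∑ j ∈ range N, ((m + j - 1).choose j : R) • (((B ^ j) ∘L Q ∘L (A ^ j)) x)

def steinMap (A B : X →L[R] X) (G : X →L[R] X) : X →L[R] X :=
  G - B ∘L G ∘L A

lemma pow_comp_comp_pow_succ_apply (A B Q : X →L[R] X) (j : ℕ) (x : X) :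
    ((B ^ (j + 1)) ∘L Q ∘L (A ^ (j + 1))) x = B (((B ^ j) ∘L Q ∘L (A ^ j)) (A x)) := by
  rw [pow_succ A j, pow_succ' B j]
  rfl

lemma gramianPartialSum_zero_left (A B Q : X →L[R] X) {N : ℕ} (hN : N ≠ 0) (x : X) :
    gramianPartialSum A B Q 0 N x = Q x := by
  obtain ⟨N, rfl⟩ := Nat.exists_eq_succ_of_ne_zero hN
  simp [gramianPartialSum, sum_range_succ']

lemma gramianPartialSum_succ_succ (A B Q : X →L[R] X) (m N : ℕ) (x : X) :
    gramianPartialSum A B Q (m + 1) (N + 1) x =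
      gramianPartialSum A B Q m (N + 1) x + B (gramianPartialSum A B Q (m + 1) N (A x)) := by
  have pascal (j : ℕ) : ((m + 1 + (j + 1) - 1).choose (j + 1) : R) =
      ((m + (j + 1) - 1).choose (j + 1) : R) + ((m + 1 + j - 1).choose j : R) := by
    rw [show m + 1 + (j + 1) - 1 = (m + j) + 1 by omega, show m + (j + 1) - 1 = m + j by omega,
      show m + 1 + j - 1 = m + j by omega, Nat.choose_succ_succ', Nat.cast_add, add_comm]
  simp only [gramianPartialSum, sum_range_succ' _ N, pascal, add_smul, sum_add_distrib,
    map_sum, map_smul, pow_comp_comp_pow_succ_apply]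
  simp only [Nat.choose_zero_right]
  abel

lemma tendsto_gramianPartialSum_zero_left (A B Q : X →L[R] X) (x : X) :
    Tendsto (fun N ↦ gramianPartialSum A B Q 0 N x) atTop (nhds (Q x)) :=
  tendsto_const_nhds.congr' <| (eventually_ne_atTop 0).mono fun _ hN ↦
    (gramianPartialSum_zero_left A B Q hN x).symm

lemma tendsto_gramianPartialSum_of_succ {A B Q G : X →L[R] X} {m : ℕ}
    (h : ∀ x, Tendsto (fun N ↦ gramianPartialSum A B Q (m + 1) N x) atTop (nhds (G x))) (x : X) :
    Tendsto (fun N ↦ gramianPartialSum A B Q m N x) atTop (nhds (steinMap A B G x)) := by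
  rw [← tendsto_add_atTop_iff_nat 1]
  have hB := ((B.continuous.tendsto _).comp (h (A x)))
  refine ((tendsto_add_atTop_iff_nat 1).2 (h x) |>.sub hB).congr fun N ↦ ?_
  simp [gramianPartialSum_succ_succ]

lemma tendsto_gramianPartialSum_iterate {A B Q G : X →L[R] X} {n : ℕ}
    (h : ∀ x, Tendsto (fun N ↦ gramianPartialSum A B Q n N x) atTop (nhds (G x))) :
    ∀ k ≤ n, ∀ x, Tendsto (fun N ↦ gramianPartialSum A B Q (n - k) N x) atTop
      (nhds ((steinMap A B)^[k] G x)) := by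
  intro k
  induction k with
  | zero => simpa using h
  | succ k ih =>
    intro hk
    rw [Function.iterate_succ_apply']
    refine tendsto_gramianPartialSum_of_succ ?_
    rw [show n - (k + 1) + 1 = n - k by omega]
    exact ih (by omega)

end Gramian

theorem stmt_10_general {X Y : Type*} [NormedAddCommGroup X] [InnerProductSpace ℂ X] [CompleteSpace X]
    [NormedAddCommGroup Y] [InnerProductSpace ℂ Y] [CompleteSpace Y]
    (n : ℕ) (A : X →L[ℂ] X) (C : X →L[ℂ] Y)
    (hGn : ∃ Gn : X →L[ℂ] X, ∀ x, Tendsto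
      (fun N => ∑ j ∈ Finset.range N,
        (Nat.choose (n + j - 1) j : ℂ) •
          ((((adjoint A) ^ j) ∘L (adjoint C ∘L C) ∘L (A ^ j)) x))
      atTop (nhds (Gn x))) :
    ∃ G : ℕ → (X →L[ℂ] X),
      G 0 = adjoint C ∘L C ∧
      (∀ m, 1 ≤ m → m ≤ n → ∀ x, Tendsto
        (fun N => ∑ j ∈ Finset.range N,
          (Nat.choose (m + j - 1) j : ℂ) •
            ((((adjoint A) ^ j) ∘L (adjoint C ∘L C) ∘L (A ^ j)) x))
        atTop (nhds (G m x))) ∧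
      (∀ m, 1 ≤ m → m ≤ n → G m - adjoint A ∘L G m ∘L A = G (m - 1)) := by
  obtain ⟨Gn, hGn⟩ := hGn
  have hlim := tendsto_gramianPartialSum_iterate (Q := adjoint C ∘L C) hGn
  refine ⟨fun m ↦ (steinMap A (adjoint A))^[n - m] Gn, ?_, ?_, ?_⟩
  · ext x
    exact tendsto_nhds_unique (by simpa using hlim n le_rfl x)
      (tendsto_gramianPartialSum_zero_left _ _ _ x)
  · intro m _ hm x
    have h := hlim (n - m) (Nat.sub_le n m) x
    rwa [Nat.sub_sub_self hm] at h
  · intro m _ hm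
    change steinMap A (adjoint A) _ = _
    rw [← Function.iterate_succ_apply' (steinMap A (adjoint A)),
      show (n - m).succ = n - (m - 1) by omega]

/-- If the `n`-observability gramian of `(C,A)` converges strongly, then so do all the
`m`-gramians for `1 ≤ m ≤ n`, and they satisfy the Stein identities
`G_m - A* G_m A = G_{m-1}` with `G_0 = C*C`. -/
theorem stmt_10 {X Y : Type*} [NormedAddCommGroup X] [InnerProductSpace ℂ X] [CompleteSpace X]
    [NormedAddCommGroup Y] [InnerProductSpace ℂ Y] [CompleteSpace Y]
    (n : ℕ) (hn : 1 ≤ n) (A : X →L[ℂ] X) (C : X →L[ℂ] Y)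
    (hGn : ∃ Gn : X →L[ℂ] X, ∀ x, Tendsto
      (fun N => ∑ j ∈ Finset.range N,
        (Nat.choose (n + j - 1) j : ℂ) •
          ((((adjoint A) ^ j) ∘L (adjoint C ∘L C) ∘L (A ^ j)) x))
      atTop (nhds (Gn x))) :
    ∃ G : ℕ → (X →L[ℂ] X),
      G 0 = adjoint C ∘L C ∧
      (∀ m, 1 ≤ m → m ≤ n → ∀ x, Tendsto
        (fun N => ∑ j ∈ Finset.range N,
          (Nat.choose (m + j - 1) j : ℂ) •
            ((((adjoint A) ^ j) ∘L (adjoint C ∘L C) ∘L (A ^ j)) x))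
        atTop (nhds (G m x))) ∧
      (∀ m, 1 ≤ m → m ≤ n → G m - adjoint A ∘L G m ∘L A = G (m - 1)) :=
  stmt_10_general n A C hGn
end

section
/- On the weighted Bergman space A_n(Y) with weights μ_{n,j} = 1/C(j+n-1, j), the evaluation operator E: f ↦ f(0) and A = S_n* (the adjoint of multiplication by z) form an n-isometric pair: Σ_{j=0}^{n} (-1)^j C(n,j) ‖S_n^{*j} f‖² = ‖f(0)‖² for every f ∈ A_n(Y). -/
/-!
Substituting `k = m + j`, the left-hand side becomes
`Σ_k μ_{n,k}² ‖f_k‖² Σ_{j ≤ k} (-1)^j C(n,j) / μ_{n,k-j}`. Since `1 / μ_{n,l} = C(l+n-1, n-1)` is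
the `l`-th coefficient of `(1 - X)^{-n}`, the inner sum is the `k`-th coefficient of
`(1 - X)^n (1 - X)^{-n} = 1`, so only the term `k = 0` survives.
-/

/-- The weight `μ_{n,j} = 1 / C(j+n-1, j)` of the weighted Bergman space `A_n`. -/
noncomputable def mu (n j : ℕ) : ℝ := 1 / (Nat.choose (j + n - 1) j : ℝ)

open PowerSeries Finset

lemma inv_mu_succ (d l : ℕ) : (mu (d + 1) l)⁻¹ = ((d + l).choose d : ℝ) := by
  rw [mu, one_div, inv_inv, Nat.add_succ_sub_one, add_comm l]
  exact_mod_cast Nat.choose_symm_add.symm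

lemma mu_pos {n : ℕ} (hn : 1 ≤ n) (l : ℕ) : 0 < mu n l := by
  obtain ⟨d, rfl⟩ := Nat.exists_eq_add_of_le' hn
  rw [← inv_pos, inv_mu_succ]
  exact_mod_cast Nat.choose_pos (Nat.le_add_right d l)

@[simp] lemma mu_zero (n : ℕ) : mu n 0 = 1 := by simp [mu]

lemma mu_add_le {n : ℕ} (hn : 1 ≤ n) (m j : ℕ) : mu n (m + j) ≤ mu n m := by
  obtain ⟨d, rfl⟩ := Nat.exists_eq_add_of_le' hn
  rw [← inv_le_inv₀ (mu_pos hn _) (mu_pos hn _), inv_mu_succ, inv_mu_succ]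
  exact_mod_cast Nat.choose_le_choose d (by omega)

lemma PowerSeries.coeff_one_sub_X_pow (R : Type*) [CommRing R] (n j : ℕ) :
    coeff j ((1 - X : R⟦X⟧) ^ n) = (-1) ^ j * n.choose j := by
  have h : (1 - X : R⟦X⟧) ^ n = rescale (-1) ((1 + X) ^ n) := by simp [sub_eq_add_neg]
  rw [h, coeff_rescale, ← binomialSeries_nat (R := ℤ), binomialSeries_coeff, Ring.choose_natCast]
  simp

-- The coefficient of `X ^ k` in `(1 - X) ^ (d + 1) * (1 - X) ^ (-(d + 1)) = 1`.
lemma sum_neg_one_pow_mul_choose_mul_choose_add (R : Type*) [CommRing R] (d k : ℕ) :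
    ∑ j ∈ range (d + 2), (-1 : R) ^ j * (d + 1).choose j *
        (if j ≤ k then ((d + (k - j)).choose d : R) else 0) = if k = 0 then 1 else 0 := by
  have h := congrArg (coeff k) (mk_add_choose_mul_one_sub_pow_eq_one (S := R) (d := d))
  rw [mul_comm, coeff_mul, Nat.sum_antidiagonal_eq_sum_range_succ
    (fun i l => coeff i ((1 - X : R⟦X⟧) ^ (d + 1)) * coeff l (mk fun l => ((d + l).choose d : R))),
    coeff_one] at h
  simp only [coeff_mk, coeff_one_sub_X_pow] at h
  rw [← h]
  calc _ = ∑ j ∈ range (d + k + 2), (-1 : R) ^ j * (d + 1).choose j *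
        (if j ≤ k then ((d + (k - j)).choose d : R) else 0) := by
        refine sum_subset (range_subset_range.mpr (by omega)) fun j _ hj => ?_
        rw [Nat.choose_eq_zero_of_lt (by simp at hj; omega)]
        simp
    _ = ∑ j ∈ range (k + 1), (-1 : R) ^ j * (d + 1).choose j *
        (if j ≤ k then ((d + (k - j)).choose d : R) else 0) := by
        refine (sum_subset (range_subset_range.mpr (by omega)) fun j _ hj => ?_).symm
        rw [if_neg (by simpa using hj), mul_zero]
    _ = _ := sum_congr rfl fun j hj => by rw [if_pos (by simpa [Nat.lt_succ_iff] using hj)]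

lemma hasSum_ite_le_iff {α : Type*} [AddCommMonoid α] [TopologicalSpace α] {f : ℕ → α} {a : α}
    (j : ℕ) : HasSum (fun k => if j ≤ k then f k else 0) a ↔ HasSum (fun m => f (m + j)) a := by
  rw [← (add_left_injective j).hasSum_iff]
  · simp [Function.comp_def]
  · exact fun k hk => if_neg fun hjk => hk ⟨k - j, Nat.sub_add_cancel hjk⟩

lemma hasSum_mul_sum_ite_le {R : Type*} [CommSemiring R] [TopologicalSpace R]
    [IsTopologicalSemiring R] (c C b T : ℕ → R) (s : Finset ℕ)
    (hT : ∀ j ∈ s, HasSum (fun m => C m * b (m + j)) (T j)) :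
    HasSum (fun k => b k * ∑ j ∈ s, c j * (if j ≤ k then C (k - j) else 0))
      (∑ j ∈ s, c j * T j) := by
  have hshift : ∀ j ∈ s, HasSum (fun k => c j * if j ≤ k then C (k - j) * b k else 0) (c j * T j) :=
    fun j hj => ((hasSum_ite_le_iff j).mpr (by simpa using hT j hj)).mul_left (c j)
  convert hasSum_sum hshift using 2 with k
  rw [mul_sum]
  refine sum_congr rfl fun j _ => ?_
  split_ifs <;> ring

lemma mu_mul_norm_smul_sq {E : Type*} [NormedAddCommGroup E] [NormedSpace ℝ E] {n : ℕ}
    (hn : 1 ≤ n) (m j : ℕ) (x : E) :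
    mu n m * ‖(mu n (m + j) / mu n m) • x‖ ^ 2 = (mu n m)⁻¹ * (mu n (m + j) ^ 2 * ‖x‖ ^ 2) := by
  have := mu_pos hn m
  rw [norm_smul, Real.norm_of_nonneg (div_pos (mu_pos hn _) this).le]
  field_simp

lemma summable_inv_mu_mul_shift {n : ℕ} (hn : 1 ≤ n) {a : ℕ → ℝ} (ha : 0 ≤ a)
    (hsum : Summable fun k => mu n k * a k) (j : ℕ) :
    Summable fun m => (mu n m)⁻¹ * (mu n (m + j) ^ 2 * a (m + j)) := by
  refine ((summable_nat_add_iff j).mpr hsum).of_nonneg_of_le (fun m => ?_) (fun m => ?_)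
  · exact mul_nonneg (inv_nonneg.mpr (mu_pos hn m).le) (mul_nonneg (sq_nonneg _) (ha _))
  · have hm := mu_pos hn m
    have hmj := mu_pos hn (m + j)
    calc (mu n m)⁻¹ * (mu n (m + j) ^ 2 * a (m + j))
        = mu n (m + j) / mu n m * (mu n (m + j) * a (m + j)) := by ring
      _ ≤ 1 * (mu n (m + j) * a (m + j)) := by
        gcongr
        · exact mul_nonneg hmj.le (ha _)
        · exact (div_le_one hm).mpr (mu_add_le hn m j)
      _ = mu n (m + j) * a (m + j) := one_mul _

theorem stmt_14_general {Y : Type*} [NormedAddCommGroup Y] [InnerProductSpace ℂ Y]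
    (n : ℕ) (hn : 1 ≤ n) (f : ℕ → Y)
    (hf : Summable fun j => mu n j * ‖f j‖ ^ 2) :
    ∑ j ∈ Finset.range (n + 1), (-1 : ℝ) ^ j * (Nat.choose n j : ℝ) *
        (∑' m : ℕ, mu n m * ‖(mu n (m + j) / mu n m) • f (m + j)‖ ^ 2)
      = ‖f 0‖ ^ 2 := by
  simp only [mu_mul_norm_smul_sq hn]
  obtain ⟨d, rfl⟩ := Nat.exists_eq_add_of_le' hn
  have hcoef : ∀ k, ∑ j ∈ range (d + 2), (-1 : ℝ) ^ j * (d + 1).choose j *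
      (if j ≤ k then (mu (d + 1) (k - j))⁻¹ else 0) = if k = 0 then 1 else 0 := fun k => by
    simpa only [inv_mu_succ] using sum_neg_one_pow_mul_choose_mul_choose_add ℝ d k
  have hsum := hasSum_mul_sum_ite_le (fun j => (-1 : ℝ) ^ j * (d + 1).choose j)
    (fun m => (mu (d + 1) m)⁻¹) (fun k => mu (d + 1) k ^ 2 * ‖f k‖ ^ 2) _ (range (d + 2))
    fun j _ => (summable_inv_mu_mul_shift hn (fun k => sq_nonneg ‖f k‖) hf j).hasSum
  beta_reduce at hsum
  simp only [hcoef] at hsum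
  rw [hsum.unique (hasSum_single 0 fun k hk => by simp [hk])]
  simp

/-- The model pair `(E, S_n*)` on the weighted Bergman space `A_n(Y)` is `n`-isometric:
`Σ_{j=0}^n (-1)^j C(n,j) ‖S_n^{*j} f‖² = ‖f(0)‖²`, where `(S_n^{*j} f)_m =
(μ_{n,m+j}/μ_{n,m}) f_{m+j}` and `‖g‖² = Σ_m μ_{n,m}‖g_m‖²`. -/
theorem stmt_14 {Y : Type*} [NormedAddCommGroup Y] [InnerProductSpace ℂ Y] [CompleteSpace Y]
    (n : ℕ) (hn : 1 ≤ n) (f : ℕ → Y)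
    (hf : Summable fun j => mu n j * ‖f j‖ ^ 2) :
    ∑ j ∈ Finset.range (n + 1), (-1 : ℝ) ^ j * (Nat.choose n j : ℝ) *
        (∑' m : ℕ, mu n m * ‖(mu n (m + j) / mu n m) • f (m + j)‖ ^ 2)
      = ‖f 0‖ ^ 2 :=
  stmt_14_general n hn f hf
end
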